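/- If C' is obtained from a concept expression C by sibling merging (choosing nodes d, d', d'' in the tree of C where d' and d'' are both r-successors of d for some role r, then removing d'', adding the label of d'' to the label of d', and reattaching all successors of d'' to d'), then C' ⊑ C holds in every interpretation (∅ ⊨ C' ⊑ C). -/

import Mathlib

/-- Concept expressions built from concept names (`C`), top, conjunction
and existential restrictions over roles (`R` is the type of roles here). -/
inductive ELC (C R : Type) : Type where
  | top : ELC C R
  | cn : C → ELC C R
  | conj : ELC C R → ELC C R → ELC C R
  | ex : R → ELC C R → ELC C R

/-- Roles: role names and inverse roles. -/
inductive Role (R : Type) : Type where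
  | nm : R → Role R
  | inv : R → Role R

/-- The inverse of a role, identifying `(r⁻)⁻` with `r`. -/
def Role.opp {R : Type} : Role R → Role R
  | .nm r => .inv r
  | .inv r => .nm r

/-- An interpretation. -/
structure Interp (C R : Type) where
  dom : Type
  inhab : Nonempty dom
  cname : C → Set dom
  rname : R → Set (dom × dom)

/-- Semantics of roles; an inverse role denotes the converse relation. -/
def Interp.roleSem {C R : Type} (I : Interp C R) : Role R → Set (I.dom × I.dom)
  | .nm r => I.rname r
  | .inv r => {p | (p.2, p.1) ∈ I.rname r}

/-- Semantics of concept expressions whose existential restrictions use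
roles (role names or inverse roles). -/
def Interp.semI {C R : Type} (I : Interp C R) : ELC C (Role R) → Set I.dom
  | .top => Set.univ
  | .cn A => I.cname A
  | .conj c d => I.semI c ∩ I.semI d
  | .ex ρ c => {x | ∃ y, (x, y) ∈ I.roleSem ρ ∧ y ∈ I.semI c}

/-- `Split X G X'` holds when `G` is (an occurrence of) a top-level conjunct
of `X` and `X'` is `X` with that occurrence removed (the remainder being `⊤`
when `G` is all of `X`). -/
inductive Split {C R : Type} : ELC C R → ELC C R → ELC C R → Prop where
  | base (c : ELC C R) : Split c c .top
  | left {a g a' : ELC C R} (b : ELC C R) : Split a g a' → Split (.conj a b) g (.conj a' b)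
  | right {b g b' : ELC C R} (a : ELC C R) : Split b g b' → Split (.conj a b) g (.conj a b')

/-- `SMerge X X'`: `X'` is obtained from `X` by sibling merging.  At some
node `d` of the tree of `X` (reached through the congruence rules) there are
two `ρ`-successors `d'` and `d''` (top-level conjunct occurrences `∃ρ.D₁`
and `∃ρ.D₂`); `d''` is removed, its label added to the label of `d'` and its
successors reattached to `d'`, i.e. the two conjuncts are replaced by
`∃ρ.(D₁ ⊓ D₂)`. -/
inductive SMerge {C R : Type} : ELC C (Role R) → ELC C (Role R) → Prop where
  | here {X Y X' D₁ D₂ : ELC C (Role R)} {ρ : Role R} :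
      Split X (.ex ρ D₁) Y → Split Y (.ex ρ D₂) X' →
      SMerge X (.conj X' (.ex ρ (.conj D₁ D₂)))
  | conjL {a a' : ELC C (Role R)} (b : ELC C (Role R)) :
      SMerge a a' → SMerge (.conj a b) (.conj a' b)
  | conjR {b b' : ELC C (Role R)} (a : ELC C (Role R)) :
      SMerge b b' → SMerge (.conj a b) (.conj a b')
  | under {a a' : ELC C (Role R)} (ρ : Role R) :
      SMerge a a' → SMerge (.ex ρ a) (.ex ρ a')

/-! A witness of `∃ρ.(D₁ ⊓ D₂)` witnesses both `∃ρ.D₁` and `∃ρ.D₂`, and the semantics is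
monotone in every conjunction and existential context, so merging can only shrink extensions. -/

namespace Interp

variable {C R : Type} (I : Interp C R)

theorem semI_split {X G X' : ELC C (Role R)} (h : Split X G X') :
    I.semI X = I.semI G ∩ I.semI X' := by
  induction h with
  | base c => exact (Set.inter_univ _).symm
  | left b _ ih => rw [semI, semI, ih, Set.inter_assoc]
  | right a _ ih => rw [semI, semI, ih, Set.inter_left_comm]

theorem semI_ex_mono {ρ : Role R} {a b : ELC C (Role R)} (h : I.semI a ⊆ I.semI b) :
    I.semI (.ex ρ a) ⊆ I.semI (.ex ρ b) :=
  fun _ ⟨y, hxy, hy⟩ => ⟨y, hxy, h hy⟩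

theorem semI_ex_conj_subset (ρ : Role R) (D₁ D₂ : ELC C (Role R)) :
    I.semI (.ex ρ (.conj D₁ D₂)) ⊆ I.semI (.ex ρ D₁) ∩ I.semI (.ex ρ D₂) :=
  fun _ ⟨y, hxy, hy₁, hy₂⟩ => ⟨⟨y, hxy, hy₁⟩, ⟨y, hxy, hy₂⟩⟩

end Interp

/-- if `C'` is obtained from `C` by sibling merging, then
`∅ ⊨ C' ⊑ C`, i.e. `C'^I ⊆ C^I` for every interpretation `I`. -/
theorem sMerge_subsumes {C R : Type} (c c' : ELC C (Role R))
    (h : SMerge c c') (I : Interp C R) :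
    I.semI c' ⊆ I.semI c := by
  induction h with
  | @here _ _ _ D₁ D₂ ρ h₁ h₂ =>
      rw [I.semI_split h₁, I.semI_split h₂]
      rintro _ ⟨hX', hmerged⟩
      obtain ⟨hD₁, hD₂⟩ := I.semI_ex_conj_subset ρ D₁ D₂ hmerged
      exact ⟨hD₁, hD₂, hX'⟩
  | conjL b _ ih => exact Set.inter_subset_inter ih subset_rfl
  | conjR a _ ih => exact Set.inter_subset_inter subset_rfl ih
  | under ρ _ ih => exact I.semI_ex_mono ih
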